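/- Forward direction of the kSUM reduction for three machines: let x_1,…,x_h be positive integers, T = Σ_{i=1}^h x_i, and k, B positive integers with 1 ≤ k < h and B < T. Consider the three-machine JIT flow-shop instance with kh+2 jobs: for each i ∈ {1,…,k} and j ∈ {1,…,h} a job J_{ij} with p^(1)_{ij} = x_j, p^(2)_{ij} = T − x_j, p^(3)_{ij} = 1, w_{ij} = T, d_{ij} = kT + i + 1; a job J_{kh+1} with p^(1)_{kh+1} = 1, p^(2)_{kh+1} = B, p^(3)_{kh+1} = 1, w_{kh+1} = k²(T+1)², d_{kh+1} = B + 2; and a job J_{kh+2} with p^(1)_{kh+2} = kT − B, p^(2)_{kh+2} = kT, p^(3)_{kh+2} = 1, w_{kh+2} = k²(T+1)², d_{kh+2} = 2kT + 2. If there exist indices j_1,…,j_k ∈ {1,…,h} (not necessarily distinct) with x_{j_1} + … + x_{j_k} = B, then this instance admits a feasible set E with Σ_{j∈E} w_j ≥ kT + 2k²(T+1)². -/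

import Mathlib

open Finset

/-- A just-in-time flow-shop instance on `m` machines with jobs of type `J`:
`p i j` is the (positive integer) processing time of job `j` on machine `i`,
`d j` its positive integer due date and `w j` its positive integer weight. -/
structure JITInstance (m : ℕ) (J : Type) where
  p : Fin m → J → ℕ
  d : J → ℕ
  w : J → ℕ
  p_pos : ∀ i j, 0 < p i j
  d_pos : ∀ j, 0 < d j
  w_pos : ∀ j, 0 < w j

/-- `S` is a JIT schedule of the job set `E`: on every machine the processing
intervals `(S i j, S i j + p i j]` of distinct jobs of `E` are pairwise disjoint,
each job's operation on machine `i+1` starts no earlier than its completion on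
machine `i`, and every job of `E` completes on the last machine exactly at its
due date.  (Start times are nonnegative automatically, being naturals.) -/
def IsJITSchedule {m : ℕ} {J : Type} (I : JITInstance m J)
    (E : Finset J) (S : Fin m → J → ℕ) : Prop :=
  (∀ i : Fin m, ∀ j ∈ E, ∀ j' ∈ E, j ≠ j' →
      S i j + I.p i j ≤ S i j' ∨ S i j' + I.p i j' ≤ S i j) ∧
  (∀ j ∈ E, ∀ i i' : Fin m, i'.val = i.val + 1 →
      S i j + I.p i j ≤ S i' j) ∧
  (∀ j ∈ E, ∀ i : Fin m, i.val = m - 1 →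
      S i j + I.p i j = I.d j)

/-- A job set is feasible if it admits a JIT schedule. -/
def Feasible {m : ℕ} {J : Type} (I : JITInstance m J) (E : Finset J) : Prop :=
  ∃ S : Fin m → J → ℕ, IsJITSchedule I E S

/-- The three-machine JIT flow-shop instance constructed in the kSUM reduction:
for each `i ∈ {1,…,k}`, `j ∈ {1,…,h}` a job `J_{ij}` (encoded `Sum.inl (i, j)`,
0-indexed) with `p¹ = x j`, `p² = T - x j`, `p³ = 1`, `w = T`, `d = kT + i + 1`;
a job `J_{kh+1}` (encoded `Sum.inr false`) with `p¹ = 1`, `p² = B`, `p³ = 1`,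
`w = k²(T+1)²`, `d = B + 2`; and a job `J_{kh+2}` (encoded `Sum.inr true`) with
`p¹ = kT - B`, `p² = kT`, `p³ = 1`, `w = k²(T+1)²`, `d = 2kT + 2`, where
`T = ∑ i, x i`. -/
def ksumInstance3 (h k B : ℕ) (x : Fin h → ℕ) (hx : ∀ i, 0 < x i)
    (hk : 1 ≤ k) (hkh : k < h) (hB : 0 < B) (hBT : B < ∑ i, x i) :
    JITInstance 3 (Fin k × Fin h ⊕ Bool) where
  p := fun i jb =>
    if i.val = 0 then
      Sum.elim (fun q => x q.2)
        (fun b => if b then k * (∑ i, x i) - B else 1) jb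
    else if i.val = 1 then
      Sum.elim (fun q => (∑ i, x i) - x q.2)
        (fun b => if b then k * (∑ i, x i) else B) jb
    else 1
  d := Sum.elim (fun q => k * (∑ i, x i) + q.1.val + 2)
    (fun b => if b then 2 * k * (∑ i, x i) + 2 else B + 2)
  w := Sum.elim (fun _ => ∑ i, x i)
    (fun _ => k ^ 2 * ((∑ i, x i) + 1) ^ 2)
  p_pos := by
    have hT : (∑ i, x i) ≤ k * (∑ i, x i) := Nat.le_mul_of_pos_left _ (by omega)
    have hxT : ∀ j : Fin h, x j < ∑ i, x i := by
      intro j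
      obtain ⟨j', hj'⟩ := Fintype.exists_ne_of_one_lt_card
        (by simpa using (by omega : 1 < h)) j
      exact Finset.single_lt_sum hj' (Finset.mem_univ _)
        (Finset.mem_univ _) (hx j') (fun _ _ _ => Nat.zero_le _)
    intro i jb
    try dsimp only
    split
    · rcases jb with ⟨a, j⟩ | b
      · simpa using hx j
      · rcases b with _ | _ <;> simp <;> omega
    · split
      · rcases jb with ⟨a, j⟩ | b
        · have := hxT j
          simp only [Sum.elim_inl]
          omega
        · rcases b with _ | _ <;> simp <;> omega
      · exact one_pos
  d_pos := by
    rintro (⟨a, j⟩ | b)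
    · simp only [Sum.elim_inl]
      omega
    · rcases b with _ | _ <;> simp
  w_pos := by
    rintro (⟨a, j⟩ | b)
    · simp only [Sum.elim_inl]
      omega
    · simp only [Sum.elim_inr]
      exact Nat.mul_pos (pow_pos (by omega : 0 < k) 2)
        (pow_pos (by omega : 0 < (∑ i, x i) + 1) 2)

/-!
On every machine, process the short job `J_{kh+1}` first, then the selected jobs `J_{i,f i}` in
increasing `i`, then the long job `J_{kh+2}`. On machine 1 the selected jobs run back to back in
`(1, B + 1]`. On machine 2 job `i` runs in `(1 + r i + i T, 1 + r (i + 1) + (i + 1) T]`, where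
`r i = x (f i) + ⋯ + x (f (k - 1))`: its length `T - x (f i)` is exactly the difference of the
endpoints, and `r i + i T` is nondecreasing because each `x (f i) ≤ T`. On machine 3 the selected
jobs fill the unit slots ending at their due dates. The short and long jobs fit before and after
because `B < T ≤ k T`, and the selected set weighs exactly `k T + 2 k² (T + 1)²`.
-/

namespace KSumReduction

theorem le_or_le_of_injOn {J : Type*} {E : Finset J} {rank : J → ℕ} (hrank : Set.InjOn rank E)
    {start len : J → ℕ}
    (hlt : ∀ j ∈ E, ∀ j' ∈ E, rank j < rank j' → start j + len j ≤ start j') :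
    ∀ j ∈ E, ∀ j' ∈ E, j ≠ j' → start j + len j ≤ start j' ∨ start j' + len j' ≤ start j := by
  intro j hj j' hj' hne
  rcases lt_trichotomy (rank j) (rank j') with h | h | h
  · exact .inl (hlt j hj j' hj' h)
  · exact absurd (hrank hj hj' h) hne
  · exact .inr (hlt j' hj' j hj h)

theorem forall_succ_of_fin_three {P : Fin 3 → Fin 3 → Prop} (h01 : P 0 1) (h12 : P 1 2) :
    ∀ t t' : Fin 3, t'.val = t.val + 1 → P t t' := by
  intro t t' htt'
  fin_cases t <;> fin_cases t' <;> first | exact h01 | exact h12 | simp at htt'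

section PrefixSums

variable {a : ℕ → ℕ} {T : ℕ}

theorem sum_range_le_mul (ha : ∀ n, a n ≤ T) (n : ℕ) : ∑ l ∈ range n, a l ≤ n * T := by
  simpa using sum_le_card_nsmul (range n) a T fun l _ => ha l

theorem monotone_sum_Ico_add_mul (ha : ∀ n, a n ≤ T) (k : ℕ) :
    Monotone fun n => ∑ l ∈ Ico n k, a l + n * T := by
  refine monotone_nat_of_le_succ fun n => ?_
  rcases lt_or_ge n k with hn | hn
  · rw [sum_eq_sum_Ico_succ_bot hn, add_one_mul]
    linarith [ha n]
  · simp only [Ico_eq_empty_of_le hn, Ico_eq_empty_of_le (hn.trans n.le_succ), sum_empty,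
      zero_add]
    exact Nat.mul_le_mul_right T n.le_succ

end PrefixSums

/-- `innerStart k T a n t` is the start time on machine `t` of the `n`-th selected job, whose
processing times are `a n`, `T - a n`, `1`; it completes on every machine exactly when job `n + 1`
starts there. -/
def innerStart (k T : ℕ) (a : ℕ → ℕ) (n : ℕ) : Fin 3 → ℕ :=
  ![1 + ∑ l ∈ range n, a l, 1 + (∑ l ∈ Ico n k, a l + n * T), k * T + n + 1]

section InnerStart

variable {a : ℕ → ℕ} {k T : ℕ}

theorem innerStart_mono (ha : ∀ n, a n ≤ T) : Monotone (innerStart k T a) := by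
  intro m n hmn t
  fin_cases t
  · simpa [innerStart] using sum_le_sum_of_subset (range_subset_range.2 hmn)
  · simpa [innerStart] using monotone_sum_Ico_add_mul ha k hmn
  · simpa [innerStart] using hmn

theorem innerStart_add_eq_succ (ha : ∀ n, a n ≤ T) {n : ℕ} (hn : n < k) (t : Fin 3) :
    innerStart k T a n t + ![a n, T - a n, 1] t = innerStart k T a (n + 1) t := by
  fin_cases t
  · show 1 + ∑ l ∈ range n, a l + a n = 1 + ∑ l ∈ range (n + 1), a l
    rw [sum_range_succ, add_assoc]
  · show 1 + (∑ l ∈ Ico n k, a l + n * T) + (T - a n) =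
      1 + (∑ l ∈ Ico (n + 1) k, a l + (n + 1) * T)
    rw [sum_eq_sum_Ico_succ_bot hn, add_one_mul]
    have := ha n
    omega
  · rfl

theorem innerStart_succ_zero_le (ha : ∀ n, a n ≤ T) {n : ℕ} (hn : n < k) :
    innerStart k T a (n + 1) 0 ≤ innerStart k T a n 1 := by
  show 1 + ∑ l ∈ range (n + 1), a l ≤ 1 + (∑ l ∈ Ico n k, a l + n * T)
  have := sum_range_le_mul ha n
  rw [sum_range_succ, sum_eq_sum_Ico_succ_bot hn]
  omega

theorem innerStart_succ_one_le (ha : ∀ n, a n ≤ T) {n : ℕ} (hn : n < k) :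
    innerStart k T a (n + 1) 1 ≤ innerStart k T a n 2 := by
  show 1 + (∑ l ∈ Ico (n + 1) k, a l + (n + 1) * T) ≤ k * T + n + 1
  have := monotone_sum_Ico_add_mul ha k (show n + 1 ≤ k from hn)
  simp only [Ico_self, sum_empty, zero_add] at this
  omega

theorem innerStart_zero : innerStart k T a 0 = ![1, 1 + ∑ l ∈ range k, a l, k * T + 1] := by
  simp [innerStart]

theorem innerStart_self :
    innerStart k T a k = ![1 + ∑ l ∈ range k, a l, 1 + k * T, k * T + k + 1] := by
  simp [innerStart]

theorem le_innerStart_zero {B : ℕ} (hsum : ∑ l ∈ range k, a l = B)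
    (hB : B < k * T) : ![1, B + 1, B + 2] ≤ innerStart k T a 0 := by
  rw [innerStart_zero, hsum]
  intro t
  fin_cases t
  · exact le_rfl
  · exact (add_comm B 1).le
  · show B + 2 ≤ k * T + 1
    omega

theorem innerStart_self_le {B : ℕ} (hsum : ∑ l ∈ range k, a l = B)
    (hk : k ≤ k * T) : innerStart k T a k ≤ ![B + 1, k * T + 1, 2 * k * T + 1] := by
  rw [innerStart_self, hsum]
  intro t
  fin_cases t
  · exact (add_comm 1 B).le
  · exact (add_comm 1 _).le
  · show k * T + k + 1 ≤ 2 * k * T + 1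
    linarith

end InnerStart

/-- Every machine processes the selected jobs in increasing `rank`. -/
def rank (k : ℕ) {h : ℕ} : Fin k × Fin h ⊕ Bool → ℕ
  | .inl q => q.1 + 1
  | .inr false => 0
  | .inr true => k + 1

def selectedJobs {h k : ℕ} (f : Fin k → Fin h) : Finset (Fin k × Fin h ⊕ Bool) :=
  (univ.image fun i => (i, f i)).disjSum univ

def selected {h k : ℕ} (x : Fin h → ℕ) (f : Fin k → Fin h) (n : ℕ) : ℕ :=
  if hn : n < k then x (f ⟨n, hn⟩) else 0

def schedule (k T B : ℕ) (a : ℕ → ℕ) {h : ℕ} : Fin 3 → Fin k × Fin h ⊕ Bool → ℕ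
  | t, .inl q => innerStart k T a q.1 t
  | t, .inr false => ![0, 1, B + 1] t
  | t, .inr true => ![B + 1, k * T + 1, 2 * k * T + 1] t

section Instance

variable {h k B : ℕ} {x : Fin h → ℕ}

theorem mem_selectedJobs {f : Fin k → Fin h} {j : Fin k × Fin h ⊕ Bool} :
    j ∈ selectedJobs f ↔ (∃ i, .inl (i, f i) = j) ∨ .inr false = j ∨ .inr true = j := by
  simp only [selectedJobs, mem_disjSum, mem_image, mem_univ, true_and, exists_exists_eq_and,
    Bool.exists_bool]

theorem injOn_rank (f : Fin k → Fin h) :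
    Set.InjOn (rank k) (selectedJobs f : Set (Fin k × Fin h ⊕ Bool)) := by
  intro j hj j' hj' hrank
  rcases mem_selectedJobs.1 hj with ⟨i, rfl⟩ | rfl | rfl <;>
    rcases mem_selectedJobs.1 hj' with ⟨i', rfl⟩ | rfl | rfl <;>
    simp only [rank] at hrank
  · obtain rfl : i = i' := Fin.ext (by omega)
    rfl
  all_goals first | rfl | omega

theorem selected_le_sum (f : Fin k → Fin h) (n : ℕ) : selected x f n ≤ ∑ i, x i := by
  unfold selected
  split
  · exact single_le_sum (fun _ _ => Nat.zero_le _) (mem_univ _)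
  · exact Nat.zero_le _

theorem sum_range_selected (f : Fin k → Fin h) :
    ∑ l ∈ range k, selected x f l = ∑ i, x (f i) := by
  simp [selected, ← Fin.sum_univ_eq_sum_range]

variable {hx : ∀ i, 0 < x i} {hk : 1 ≤ k} {hkh : k < h} {hB : 0 < B} {hBT : B < ∑ i, x i}

theorem p_inl (t : Fin 3) (q : Fin k × Fin h) :
    (ksumInstance3 h k B x hx hk hkh hB hBT).p t (.inl q) =
      ![x q.2, (∑ i, x i) - x q.2, 1] t := by
  fin_cases t <;> rfl

theorem p_inr_false (t : Fin 3) :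
    (ksumInstance3 h k B x hx hk hkh hB hBT).p t (.inr false) = ![1, B, 1] t := by
  fin_cases t <;> rfl

theorem p_inr_true (t : Fin 3) :
    (ksumInstance3 h k B x hx hk hkh hB hBT).p t (.inr true) =
      ![k * (∑ i, x i) - B, k * (∑ i, x i), 1] t := by
  fin_cases t <;> rfl

theorem schedule_add_p_inl (f : Fin k → Fin h) (i : Fin k) (t : Fin 3) :
    schedule k (∑ i, x i) B (selected x f) t (.inl (i, f i)) +
        (ksumInstance3 h k B x hx hk hkh hB hBT).p t (.inl (i, f i)) =
      innerStart k (∑ i, x i) (selected x f) (i + 1) t := by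
  have hsel : selected x f i = x (f i) := by simp [selected]
  rw [← innerStart_add_eq_succ (selected_le_sum f) i.isLt, p_inl, hsel]
  rfl

theorem schedule_add_p_inr_false (a : ℕ → ℕ) (t : Fin 3) :
    schedule k (∑ i, x i) B a t (.inr false : Fin k × Fin h ⊕ Bool) +
        (ksumInstance3 h k B x hx hk hkh hB hBT).p t (.inr false) = ![1, B + 1, B + 2] t := by
  rw [p_inr_false]
  fin_cases t
  exacts [rfl, add_comm 1 B, rfl]

theorem schedule_add_p_inr_true (a : ℕ → ℕ) (t : Fin 3) :
    schedule k (∑ i, x i) B a t (.inr true : Fin k × Fin h ⊕ Bool) +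
        (ksumInstance3 h k B x hx hk hkh hB hBT).p t (.inr true) =
      ![k * (∑ i, x i) + 1, 2 * k * (∑ i, x i) + 1, 2 * k * (∑ i, x i) + 2] t := by
  have hBkT : B ≤ k * ∑ i, x i := hBT.le.trans (Nat.le_mul_of_pos_left _ hk)
  rw [p_inr_true]
  fin_cases t
  · show B + 1 + (k * ∑ i, x i - B) = k * ∑ i, x i + 1
    omega
  · show k * ∑ i, x i + 1 + k * ∑ i, x i = 2 * k * ∑ i, x i + 1
    ring
  · rfl

theorem isJITSchedule_schedule (f : Fin k → Fin h) (hf : ∑ i, x (f i) = B) :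
    IsJITSchedule (ksumInstance3 h k B x hx hk hkh hB hBT) (selectedJobs f)
      (schedule k (∑ i, x i) B (selected x f)) := by
  have hsum : ∑ l ∈ range k, selected x f l = B := (sum_range_selected f).trans hf
  have hBkT : B < k * ∑ i, x i := hBT.trans_le (Nat.le_mul_of_pos_left _ hk)
  have hkkT : k ≤ k * ∑ i, x i := Nat.le_mul_of_pos_right k (by omega)
  have hmono := innerStart_mono (k := k) (selected_le_sum (x := x) f)
  have hshort := le_innerStart_zero hsum hBkT
  have hlong := innerStart_self_le hsum hkkT
  refine ⟨fun t => le_or_le_of_injOn (injOn_rank f) ?_, ?_, ?_⟩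
  · intro j hj j' hj' hlt
    rcases mem_selectedJobs.1 hj with ⟨i, rfl⟩ | rfl | rfl <;>
      rcases mem_selectedJobs.1 hj' with ⟨i', rfl⟩ | rfl | rfl <;>
      simp only [rank] at hlt
    · rw [schedule_add_p_inl]
      exact hmono (by omega : (i : ℕ) + 1 ≤ i') t
    · omega
    · rw [schedule_add_p_inl]
      exact ((hmono (by omega : (i : ℕ) + 1 ≤ k)).trans hlong) t
    · rw [schedule_add_p_inr_false]
      exact (hshort.trans (hmono (Nat.zero_le _))) t
    · omega
    · rw [schedule_add_p_inr_false]
      exact (hshort.trans ((hmono (Nat.zero_le k)).trans hlong)) t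
    all_goals omega
  · intro j hj
    rcases mem_selectedJobs.1 hj with ⟨i, rfl⟩ | rfl | rfl <;> refine forall_succ_of_fin_three ?_ ?_
    · rw [schedule_add_p_inl]
      exact innerStart_succ_zero_le (selected_le_sum f) i.isLt
    · rw [schedule_add_p_inl]
      exact innerStart_succ_one_le (selected_le_sum f) i.isLt
    · rw [schedule_add_p_inr_false]
      exact le_rfl
    · rw [schedule_add_p_inr_false]
      exact le_rfl
    · rw [schedule_add_p_inr_true]
      exact le_rfl
    · rw [schedule_add_p_inr_true]
      exact le_rfl
  · intro j hj t ht
    obtain rfl : t = 2 := Fin.ext ht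
    rcases mem_selectedJobs.1 hj with ⟨i, rfl⟩ | rfl | rfl
    · rw [schedule_add_p_inl]
      rfl
    · rw [schedule_add_p_inr_false]
      rfl
    · rw [schedule_add_p_inr_true]
      rfl

theorem sum_w_selectedJobs (f : Fin k → Fin h) :
    ∑ j ∈ selectedJobs f, (ksumInstance3 h k B x hx hk hkh hB hBT).w j =
      k * (∑ i, x i) + 2 * (k ^ 2 * ((∑ i, x i) + 1) ^ 2) := by
  rw [selectedJobs, sum_disjSum, sum_image fun i _ i' _ hii' => congrArg Prod.fst hii']
  simp [ksumInstance3]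

end Instance

end KSumReduction

/-- forward direction of the kSUM reduction for three machines.
If some `k` of the numbers `x 0, …, x (h-1)` (with repetitions allowed) sum to
`B`, then the constructed instance has a feasible set of total weight at least
`kT + 2k²(T+1)²`. -/
theorem ksum_three_machines_forward (h k B : ℕ) (x : Fin h → ℕ)
    (hx : ∀ i, 0 < x i) (hk : 1 ≤ k) (hkh : k < h) (hB : 0 < B)
    (hBT : B < ∑ i, x i)
    (f : Fin k → Fin h) (hf : ∑ i, x (f i) = B) :
    ∃ E : Finset (Fin k × Fin h ⊕ Bool),
      Feasible (ksumInstance3 h k B x hx hk hkh hB hBT) E ∧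
      k * (∑ i, x i) + 2 * (k ^ 2 * ((∑ i, x i) + 1) ^ 2)
        ≤ ∑ jb ∈ E, (ksumInstance3 h k B x hx hk hkh hB hBT).w jb := by
  exact ⟨KSumReduction.selectedJobs f, ⟨_, KSumReduction.isJITSchedule_schedule f hf⟩,
    (KSumReduction.sum_w_selectedJobs f).ge⟩
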